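/- arXiv:2302.08702 — 4 statements merged into one kernel-verified Lean document; each statement's English description precedes it below -/
import Mathlib

section
/- Let D ⊆ ℝ^p be an open convex set and u ∈ D. If w ∈ D° (the polar of D) satisfies ⟨w, u⟩ = 0, then w = 0. Equivalently, for any nonzero w ∈ D° and any u ∈ D, ⟨w, u⟩ < 0. -/
open scoped RealInnerProductSpace

/-- Bueno–Cotrina Lemma 2.1: if `D ⊆ ℝ^p` is open convex, `u ∈ D`, and `w` lies in
the polar `D° = {w : ⟪w, u⟫ ≤ 0 ∀ u ∈ D}` with `⟪w, u⟫ = 0`, then `w = 0`. -/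
theorem polar_open_convex_eq_zero (p : ℕ) (D : Set (EuclideanSpace ℝ (Fin p)))
    (hDopen : IsOpen D) (hDconv : Convex ℝ D)
    (u : EuclideanSpace ℝ (Fin p)) (hu : u ∈ D)
    (w : EuclideanSpace ℝ (Fin p))
    (hw : ∀ v ∈ D, ⟪w, v⟫ ≤ 0) (hwu : ⟪w, u⟫ = 0) :
    w = 0 := by
  by_contra hw0
  have hwn : 0 < ‖w‖ := norm_pos_iff.mpr hw0
  obtain ⟨ε, hε, hball⟩ := Metric.isOpen_iff.mp hDopen u hu
  set t : ℝ := ε / (2 * ‖w‖) with ht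
  have htpos : 0 < t := div_pos hε (by positivity)
  have hmem : u + t • w ∈ D := by
    apply hball
    rw [Metric.mem_ball, dist_eq_norm]
    simp only [add_sub_cancel_left, norm_smul, Real.norm_eq_abs, abs_of_pos htpos]
    have : ‖w‖ * t = ε / 2 := by
      rw [ht]; field_simp
    rw [mul_comm t, this]; linarith
  have := hw _ hmem
  rw [inner_add_right, hwu, real_inner_smul_right, real_inner_self_eq_norm_sq] at this
  have : 0 < t * ‖w‖ ^ 2 := by positivity
  linarith
end

section
/- Let X ⊆ ℝ^n be a product X = ∏ᵢ Xᵢ and for each player i let Pᵢ : X → subsets of Xᵢ ⊆ ℝ^{nᵢ} be lower semicontinuous. Define Tᵢ(x) = conv(𝒩_{conv∘Pᵢ}(x) ∩ Sᵢ[0,1]) and T(x) = ∏ᵢ Tᵢ(x). Then T is an upper semicontinuous set-valued map with values contained in the closed unit ball product. -/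
/-!
Lower semicontinuity passes from `Pᵢ` to `conv ∘ Pᵢ`: a convex combination of points of `Pᵢ(x)`
is approximated by the same combination of nearby points of `Pᵢ(x')`. A strict inequality
`⟪w, z - xᵢ⟫ > 0` witnessing `w ∉ 𝒩(x)` persists near `(x, w)`, so the map
`x ↦ 𝒩_{conv∘Pᵢ}(x) ∩ Sᵢ` has closed graph, and with values in the compact sphere it is upper
semicontinuous. In finite dimension the convex hull of a compact set is compact (Carathéodory) and
thickenings of convex sets are convex, so passing to convex hulls and to the finite product keeps
upper semicontinuity.
-/

open scoped RealInnerProductSpace Topology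
open Set Metric Filter Function Module

section Caratheodory

variable {E : Type*} [AddCommGroup E] [Module ℝ E]

theorem convexHull_eq_image_stdSimplex [FiniteDimensional ℝ E] (s : Set E) :
    convexHull ℝ s =
      (fun p : (Fin (finrank ℝ E + 1) → ℝ) × (Fin (finrank ℝ E + 1) → E) => ∑ j, p.1 j • p.2 j) ''
        (stdSimplex ℝ _ ×ˢ univ.pi fun _ => s) := by
  refine Subset.antisymm (fun x hx => ?_) ?_
  · obtain ⟨κ, _, z, w, hzs, hz, hw0, hw1, rfl⟩ := eq_pos_convex_span_of_mem_convexHull hx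
    have hcard : Fintype.card κ ≤ Fintype.card (Fin (finrank ℝ E + 1)) := by
      simpa using hz.card_le_finrank_succ.trans (by gcongr; exact Submodule.finrank_le _)
    -- Carathéodory leaves at most `finrank ℝ E + 1` points; pad with zero weights.
    obtain ⟨e⟩ := Function.Embedding.nonempty_of_card_le hcard
    obtain ⟨i₀⟩ : Nonempty κ := by
      by_contra! h
      simp at hw1
    set w' := extend e w 0
    set z' := extend e z fun _ => z i₀
    have hw'e : ∀ i, w' (e i) = w i := e.injective.extend_apply _ _
    have hz'e : ∀ i, z' (e i) = z i := e.injective.extend_apply _ _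
    have hw'0 : ∀ j ∉ range e, w' j = 0 := fun j hj => extend_apply' _ _ _ hj
    refine ⟨(w', z'), ⟨⟨fun j => ?_, ?_⟩, fun j _ => ?_⟩, ?_⟩
    · by_cases hj : j ∈ range e
      · obtain ⟨i, rfl⟩ := hj
        exact (hw'e i).ge.trans' (hw0 i).le
      · exact (hw'0 j hj).ge
    · rw [← hw1]
      exact (Fintype.sum_of_injective e e.injective _ _ hw'0 fun i => (hw'e i).symm).symm
    · show z' j ∈ s
      by_cases hj : j ∈ range e
      · obtain ⟨i, rfl⟩ := hj
        exact hz'e i ▸ hzs (mem_range_self i)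
      · rw [show z' j = z i₀ from extend_apply' _ _ _ hj]
        exact hzs (mem_range_self i₀)
    · refine (Fintype.sum_of_injective e e.injective _ _ (fun j hj => ?_) fun i => ?_).symm
      · simp [hw'0 j hj]
      · simp [hw'e, hz'e]
  · rintro _ ⟨⟨w, z⟩, ⟨hw, hz⟩, rfl⟩
    exact mem_convexHull_iff_exists_fintype.mpr ⟨_, _, w, z, hw.1, hw.2, fun j => hz j trivial, rfl⟩

variable [TopologicalSpace E] [ContinuousAdd E] [ContinuousSMul ℝ E] [FiniteDimensional ℝ E]

theorem IsCompact.convexHull {s : Set E} (hs : IsCompact s) : IsCompact (convexHull ℝ s) := by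
  rw [convexHull_eq_image_stdSimplex]
  exact (IsCompact.prod (isCompact_stdSimplex ℝ _) (isCompact_univ_pi fun _ => hs)).image
    (by fun_prop)

end Caratheodory

section SetValued

variable {α β E : Type*}

/-- Lower semicontinuity of `Q` at `x₀` relative to `X` is the case `l = 𝓝[X] x₀`, `S = Q x₀`. -/
def LowerSemicontinuousAlong [TopologicalSpace E] (l : Filter α) (Q : α → Set E) (S : Set E) :
    Prop :=
  ∀ V, IsOpen V → (S ∩ V).Nonempty → ∀ᶠ x in l, (Q x ∩ V).Nonempty

theorem LowerSemicontinuousAlong.convexHull [TopologicalSpace E] [AddCommGroup E] [Module ℝ E]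
    [ContinuousAdd E] [ContinuousSMul ℝ E] {l : Filter α} {Q : α → Set E} {S : Set E}
    (h : LowerSemicontinuousAlong l Q S) :
    LowerSemicontinuousAlong l (fun x => convexHull ℝ (Q x)) (convexHull ℝ S) := by
  rintro V hV ⟨_, hz, hzV⟩
  obtain ⟨κ, _, c, g, hc0, hc1, hgS, rfl⟩ := mem_convexHull_iff_exists_fintype.mp hz
  have hcomb : Continuous fun p : κ → E => ∑ m, c m • p m := by fun_prop
  obtain ⟨U, hU, hUV⟩ := isOpen_pi_iff'.mp (hV.preimage hcomb) g hzV
  filter_upwards [eventually_all.mpr fun m => h (U m) (hU m).1 ⟨g m, hgS m, (hU m).2⟩] with x hx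
  choose p hpQ hpU using hx
  exact ⟨_, mem_convexHull_iff_exists_fintype.mpr ⟨κ, _, c, p, hc0, hc1, hpQ, rfl⟩,
    hUV fun m _ => hpU m⟩

theorem IsCompact.eventually_subset_of_forall_eventually_notMem [TopologicalSpace β]
    {l : Filter α} {F : α → Set β} {K S W : Set β} (hK : IsCompact K) (hFK : ∀ x, F x ⊆ K)
    (hW : IsOpen W) (hSW : S ⊆ W) (hF : ∀ y ∉ S, ∀ᶠ p in l ×ˢ 𝓝 y, p.2 ∉ F p.1) :
    ∀ᶠ x in l, F x ⊆ W := by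
  have hlocal : ∀ y ∈ K, {p : α × β | p.2 ∈ F p.1 → p.2 ∈ W} ∈ l ×ˢ 𝓝 y := by
    intro y _
    by_cases hy : y ∈ S
    · exact ((hW.eventually_mem (hSW hy)).prod_inr l).mono fun p hp _ => hp
    · exact (hF y hy).mono fun p hp hpF => (hp hpF).elim
  have hcompact : ∀ᶠ p in l ×ˢ 𝓝ˢ K, p.2 ∈ F p.1 → p.2 ∈ W := hK.mem_prod_nhdsSet_of_forall hlocal
  filter_upwards [hcompact.curry] with x hx y hy
  exact hx.self_of_nhdsSet y (hFK x hy) hy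

end SetValued

section NormalCone

variable {α E : Type*} [NormedAddCommGroup E] [InnerProductSpace ℝ E]

def normalCone (C : Set E) (a : E) : Set E :=
  {w | ∀ z ∈ C, ⟪w, z - a⟫ ≤ 0}

theorem isClosed_normalCone (C : Set E) (a : E) : IsClosed (normalCone C a) := by
  simp only [normalCone, ofPred_forall]
  exact isClosed_biInter fun z _ => isClosed_le (by fun_prop) continuous_const

theorem isCompact_normalCone_inter_sphere [FiniteDimensional ℝ E] (C : Set E) (a : E) :
    IsCompact (normalCone C a ∩ sphere 0 1) :=
  (isCompact_sphere 0 1).inter_left (isClosed_normalCone C a)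

variable {l : Filter α} {Q : α → Set E} {S : Set E} {a : α → E} {a₀ : E}

theorem LowerSemicontinuousAlong.eventually_notMem_normalCone
    (hQ : LowerSemicontinuousAlong l Q S) (ha : Tendsto a l (𝓝 a₀)) {w : E}
    (hw : w ∉ normalCone S a₀) : ∀ᶠ p in l ×ˢ 𝓝 w, p.2 ∉ normalCone (Q p.1) (a p.1) := by
  obtain ⟨z, hzS, hpos⟩ : ∃ z ∈ S, 0 < ⟪w, z - a₀⟫ := by simpa [normalCone] using hw
  have hopen : IsOpen {q : E × E × E | 0 < ⟪q.1, q.2.1 - q.2.2⟫} :=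
    isOpen_lt continuous_const (by fun_prop)
  obtain ⟨U, t, hU, ht, hwU, hzt, hUt⟩ := isOpen_prod_iff.mp hopen w (z, a₀) hpos
  obtain ⟨V, B, hV, hB, hzV, haB, hVB⟩ := isOpen_prod_iff.mp ht z a₀ hzt
  have hnear : ∀ᶠ x in l, (Q x ∩ V).Nonempty ∧ a x ∈ B :=
    (hQ V hV ⟨z, hzS, hzV⟩).and (ha (hB.mem_nhds haB))
  filter_upwards [hnear.prod_mk (hU.mem_nhds hwU)]
    with ⟨x, w'⟩ ⟨⟨⟨z', hz'Q, hz'V⟩, hxB⟩, hw'U⟩ hN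
  exact (hN z' hz'Q).not_gt (hUt (mk_mem_prod hw'U (hVB (mk_mem_prod hz'V hxB))))

theorem LowerSemicontinuousAlong.eventually_normalCone_inter_sphere_subset
    [FiniteDimensional ℝ E] (hQ : LowerSemicontinuousAlong l Q S) (ha : Tendsto a l (𝓝 a₀))
    {W : Set E} (hW : IsOpen W) (hSW : normalCone S a₀ ∩ sphere 0 1 ⊆ W) :
    ∀ᶠ x in l, normalCone (Q x) (a x) ∩ sphere 0 1 ⊆ W := by
  refine (isCompact_sphere 0 1).eventually_subset_of_forall_eventually_notMem
    (fun _ => inter_subset_right) hW hSW fun w hw => ?_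
  by_cases hws : w ∈ sphere 0 1
  · filter_upwards [hQ.eventually_notMem_normalCone ha fun hN => hw ⟨hN, hws⟩]
      with p hp hpN using hp hpN.1
  · filter_upwards [(isClosed_sphere.isOpen_compl.eventually_mem hws).prod_inr l]
      with p hp hpN using hp hpN.2

end NormalCone

theorem pi_thickening_subset {ι : Type*} [Fintype ι] {π : ι → Type*}
    [∀ i, PseudoMetricSpace (π i)] {δ : ℝ} (hδ : 0 < δ) (s : ∀ i, Set (π i)) :
    univ.pi (fun i => thickening δ (s i)) ⊆ thickening δ (univ.pi s) := by
  intro w hw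
  choose c hc hcw using fun i => mem_thickening_iff.mp (hw i trivial)
  exact mem_thickening_iff.mpr ⟨c, fun i _ => hc i, (dist_pi_lt_iff hδ).mpr hcw⟩

theorem T_usc_general (ι : Type*) [Fintype ι] (n : ι → ℕ)
    (Xs : ∀ i, Set (EuclideanSpace ℝ (Fin (n i))))
    (P : ∀ i, (∀ j, EuclideanSpace ℝ (Fin (n j))) → Set (EuclideanSpace ℝ (Fin (n i))))
    -- lower semicontinuity of each `Pᵢ` on `X = ∏ᵢ Xᵢ`
    (hlsc : ∀ i, ∀ x ∈ Set.pi Set.univ Xs, ∀ V : Set (EuclideanSpace ℝ (Fin (n i))),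
      IsOpen V → (P i x ∩ V).Nonempty →
      ∃ U ∈ nhdsWithin x (Set.pi Set.univ Xs), ∀ x' ∈ U, (P i x' ∩ V).Nonempty)
    (T : ∀ i, (∀ j, EuclideanSpace ℝ (Fin (n j))) → Set (EuclideanSpace ℝ (Fin (n i))))
    (hT : ∀ i x, T i x = convexHull ℝ
      ({w : EuclideanSpace ℝ (Fin (n i)) |
          ∀ z ∈ convexHull ℝ (P i x), ⟪w, z - x i⟫ ≤ 0} ∩
        Metric.sphere (0 : EuclideanSpace ℝ (Fin (n i))) 1)) :
    -- `T = ∏ᵢ Tᵢ` is upper semicontinuous on `X` ...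
    (∀ x ∈ Set.pi Set.univ Xs, ∀ W : Set (∀ j, EuclideanSpace ℝ (Fin (n j))),
      IsOpen W → Set.pi Set.univ (fun i => T i x) ⊆ W →
      ∃ U ∈ nhdsWithin x (Set.pi Set.univ Xs), ∀ x' ∈ U,
        Set.pi Set.univ (fun i => T i x') ⊆ W) ∧
    -- ... with values in the product of closed unit balls
    (∀ x, Set.pi Set.univ (fun i => T i x) ⊆
      Set.pi Set.univ (fun i => Metric.closedBall (0 : EuclideanSpace ℝ (Fin (n i))) 1)) := by
  have hTA : ∀ i x, T i x = convexHull ℝ (normalCone (convexHull ℝ (P i x)) (x i) ∩ sphere 0 1) :=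
    hT
  refine ⟨fun x hx W hW hTW => ?_, fun x w hw i _ => ?_⟩
  · have hK : IsCompact (univ.pi fun i => T i x) := isCompact_univ_pi fun i => by
      rw [hTA]
      exact (isCompact_normalCone_inter_sphere _ _).convexHull
    obtain ⟨δ, hδ, hδW⟩ := hK.exists_thickening_subset_open hW hTW
    have hnear : ∀ᶠ x' in 𝓝[univ.pi Xs] x, ∀ i, T i x' ⊆ thickening δ (T i x) := by
      refine eventually_all.mpr fun i => ?_
      have hPi : LowerSemicontinuousAlong (𝓝[univ.pi Xs] x) (P i) (P i x) :=
        fun V hV hPV => eventually_iff_exists_mem.mpr (hlsc i x hx V hV hPV)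
      have hxi : Tendsto (fun x' => x' i) (𝓝[univ.pi Xs] x) (𝓝 (x i)) :=
        ((continuous_apply i).tendsto x).mono_left nhdsWithin_le_nhds
      filter_upwards [hPi.convexHull.eventually_normalCone_inter_sphere_subset hxi
        isOpen_thickening ((subset_convexHull ℝ _).trans (self_subset_thickening hδ _))]
        with x' hx'
      rw [hTA, hTA]
      exact convexHull_min hx' ((convex_convexHull ℝ _).thickening δ)
    obtain ⟨U, hU, hUT⟩ := hnear.exists_mem
    exact ⟨U, hU, fun x' hx' =>
      (pi_mono fun i _ => hUT x' hx' i).trans ((pi_thickening_subset hδ _).trans hδW)⟩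
  · have hwi : w i ∈ T i x := hw i trivial
    rw [hTA] at hwi
    exact convexHull_min (fun u hu => sphere_subset_closedBall hu.2) (convex_closedBall _ _) hwi

/-- If each preference map `Pᵢ : X ⇉ Xᵢ` is lower semicontinuous, then the map
`T(x) = ∏ᵢ conv(𝒩_{conv∘Pᵢ}(x) ∩ Sᵢ[0,1])` is upper semicontinuous on `X = ∏ᵢ Xᵢ`
and its values lie in the product of closed unit balls. -/
theorem T_usc (ι : Type*) [Fintype ι] (n : ι → ℕ)
    (Xs : ∀ i, Set (EuclideanSpace ℝ (Fin (n i))))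
    (P : ∀ i, (∀ j, EuclideanSpace ℝ (Fin (n j))) → Set (EuclideanSpace ℝ (Fin (n i))))
    (hPsub : ∀ i x, P i x ⊆ Xs i)
    -- lower semicontinuity of each `Pᵢ` on `X = ∏ᵢ Xᵢ`
    (hlsc : ∀ i, ∀ x ∈ Set.pi Set.univ Xs, ∀ V : Set (EuclideanSpace ℝ (Fin (n i))),
      IsOpen V → (P i x ∩ V).Nonempty →
      ∃ U ∈ nhdsWithin x (Set.pi Set.univ Xs), ∀ x' ∈ U, (P i x' ∩ V).Nonempty)
    (T : ∀ i, (∀ j, EuclideanSpace ℝ (Fin (n j))) → Set (EuclideanSpace ℝ (Fin (n i))))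
    (hT : ∀ i x, T i x = convexHull ℝ
      ({w : EuclideanSpace ℝ (Fin (n i)) |
          ∀ z ∈ convexHull ℝ (P i x), ⟪w, z - x i⟫ ≤ 0} ∩
        Metric.sphere (0 : EuclideanSpace ℝ (Fin (n i))) 1)) :
    -- `T = ∏ᵢ Tᵢ` is upper semicontinuous on `X` ...
    (∀ x ∈ Set.pi Set.univ Xs, ∀ W : Set (∀ j, EuclideanSpace ℝ (Fin (n j))),
      IsOpen W → Set.pi Set.univ (fun i => T i x) ⊆ W →
      ∃ U ∈ nhdsWithin x (Set.pi Set.univ Xs), ∀ x' ∈ U,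
        Set.pi Set.univ (fun i => T i x') ⊆ W) ∧
    -- ... with values in the product of closed unit balls
    (∀ x, Set.pi Set.univ (fun i => T i x) ⊆
      Set.pi Set.univ (fun i => Metric.closedBall (0 : EuclideanSpace ℝ (Fin (n i))) 1)) :=
  T_usc_general ι n Xs P hlsc T hT
end

section
/- Suppose for each player i, Kᵢ : X → subsets of Xᵢ has nonempty values and Pᵢ : X → subsets of Xᵢ has open upper sections. Let K(x) = ∏ᵢ Kᵢ(x) and T(x) = ∏ᵢ conv(𝒩_{conv∘Pᵢ}(x) ∩ Sᵢ[0,1]). Then any solution x̃ of the quasi-variational inequality QVI(T, K) (x̃ ∈ K(x̃) and ∃ x̃* ∈ T(x̃) with ⟨x̃*, y − x̃⟩ ≥ 0 for all y ∈ K(x̃)) is an equilibrium of the abstract economy Γ = (Xᵢ, Kᵢ, Pᵢ), i.e., x̃ ∈ K(x̃) and conv(Pᵢ(x̃)) ∩ Kᵢ(x̃) = ∅ for all i (in particular Pᵢ(x̃) ∩ Kᵢ(x̃) = ∅). -/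
open scoped RealInnerProductSpace

/-- Any solution of the quasi-variational inequality `QVI(T, K)` is an equilibrium of
the abstract economy `Γ = (Xᵢ, Kᵢ, Pᵢ)` when the constraint maps have nonempty values
and the preference maps have open upper sections. -/
theorem QVI_solution_is_equilibrium (ι : Type*) [Fintype ι] [DecidableEq ι] (n : ι → ℕ)
    (Xs : ∀ i, Set (EuclideanSpace ℝ (Fin (n i))))
    (K : ∀ i, (∀ j, EuclideanSpace ℝ (Fin (n j))) → Set (EuclideanSpace ℝ (Fin (n i))))
    (hKsub : ∀ i x, K i x ⊆ Xs i)
    -- (a) nonempty values of the constraint maps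
    (hKne : ∀ i x, (K i x).Nonempty)
    (P : ∀ i, (∀ j, EuclideanSpace ℝ (Fin (n j))) → Set (EuclideanSpace ℝ (Fin (n i))))
    (hPsub : ∀ i x, P i x ⊆ Xs i)
    -- (b) open upper sections
    (hopen : ∀ i x, IsOpen (P i x))
    (T : ∀ i, (∀ j, EuclideanSpace ℝ (Fin (n j))) → Set (EuclideanSpace ℝ (Fin (n i))))
    (hT : ∀ i x, T i x = convexHull ℝ
      ({w : EuclideanSpace ℝ (Fin (n i)) |
          ∀ z ∈ convexHull ℝ (P i x), ⟪w, z - x i⟫ ≤ 0} ∩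
        Metric.sphere (0 : EuclideanSpace ℝ (Fin (n i))) 1))
    -- `xt` solves `QVI(T, K)`
    (xt : ∀ j, EuclideanSpace ℝ (Fin (n j))) (hxtK : ∀ i, xt i ∈ K i xt)
    (xts : ∀ j, EuclideanSpace ℝ (Fin (n j))) (hxts : ∀ i, xts i ∈ T i xt)
    (hQVI : ∀ y : ∀ j, EuclideanSpace ℝ (Fin (n j)), (∀ i, y i ∈ K i xt) →
      0 ≤ ∑ i, ⟪xts i, y i - xt i⟫) :
    ∀ i, convexHull ℝ (P i xt) ∩ K i xt = ∅ := by

  intro i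
  by_contra hne
  obtain ⟨z, hz1, hz2⟩ := Set.nonempty_iff_ne_empty.2 hne
  -- Step A: isolate the i-th term of the QVI inequality
  have hge : 0 ≤ ⟪xts i, z - xt i⟫ := by
    have hy : ∀ j, Function.update xt i z j ∈ K j xt := by
      intro j
      rcases eq_or_ne j i with rfl | hj
      · simpa using hz2
      · simpa [Function.update_of_ne hj] using hxtK j
    have hsum := hQVI (Function.update xt i z) hy
    rw [Finset.sum_eq_single_of_mem i (Finset.mem_univ i)
      (fun j _ hj => by simp [Function.update_of_ne hj])] at hsum
    simpa using hsum
  -- Step B: every p ∈ P i xt is strictly separated from xt i by xts i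
  have hPstrict : ∀ p ∈ P i xt, ⟪xts i, p - xt i⟫ < 0 := by
    intro p hp
    have hmem : xts i ∈ convexHull ℝ
        ({w : EuclideanSpace ℝ (Fin (n i)) |
            ∀ z' ∈ convexHull ℝ (P i xt), ⟪w, z' - xt i⟫ ≤ 0} ∩
          Metric.sphere (0 : EuclideanSpace ℝ (Fin (n i))) 1) := by
      have := hxts i; rwa [hT i xt] at this
    have hconv : Convex ℝ {w : EuclideanSpace ℝ (Fin (n i)) | ⟪w, p - xt i⟫ < 0} := by
      refine convex_halfSpace_lt ⟨?_, ?_⟩ 0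
      · intro a b; exact inner_add_left a b _
      · intro c a; exact real_inner_smul_left a _ c
    have hsub : ({w : EuclideanSpace ℝ (Fin (n i)) |
            ∀ z' ∈ convexHull ℝ (P i xt), ⟪w, z' - xt i⟫ ≤ 0} ∩
          Metric.sphere (0 : EuclideanSpace ℝ (Fin (n i))) 1) ⊆
        {w : EuclideanSpace ℝ (Fin (n i)) | ⟪w, p - xt i⟫ < 0} := by
      rintro w ⟨hw1, hw2⟩
      have hwnorm : ‖w‖ = 1 := by simpa using hw2
      obtain ⟨ε, hε, hball⟩ := Metric.isOpen_iff.1 (hopen i xt) p hp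
      have hp' : p + (ε / 2) • w ∈ P i xt := by
        apply hball
        rw [Metric.mem_ball, dist_eq_norm]
        have : ‖p + (ε / 2) • w - p‖ = ε / 2 := by
          simp [norm_smul, hwnorm, abs_of_pos hε]
        rw [this]; linarith
      have hle := hw1 _ (subset_convexHull ℝ _ hp')
      have hexp : ⟪w, p + (ε / 2) • w - xt i⟫
          = ⟪w, p - xt i⟫ + (ε / 2) * ‖w‖ ^ 2 := by
        have : p + (ε / 2) • w - xt i = (p - xt i) + (ε / 2) • w := by abel
        rw [this, inner_add_right, real_inner_smul_right, real_inner_self_eq_norm_sq]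
      rw [hexp, hwnorm] at hle
      have : ⟪w, p - xt i⟫ ≤ -(ε / 2) := by linarith
      have : ⟪w, p - xt i⟫ < 0 := by linarith
      exact this
    exact convexHull_min hsub hconv hmem
  -- Step C: extend strict separation to the convex hull, contradiction
  have hconv2 : Convex ℝ {v : EuclideanSpace ℝ (Fin (n i)) | ⟪xts i, v - xt i⟫ < 0} := by
    have : {v : EuclideanSpace ℝ (Fin (n i)) | ⟪xts i, v - xt i⟫ < 0}
        = {v : EuclideanSpace ℝ (Fin (n i)) | ⟪xts i, v⟫ < ⟪xts i, xt i⟫} := by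
      ext v; simp [inner_sub_right, sub_neg]
    rw [this]
    refine convex_halfSpace_lt ⟨?_, ?_⟩ _
    · intro a b; exact inner_add_right _ a b
    · intro c a; exact real_inner_smul_right _ a c
  have hlt : ⟪xts i, z - xt i⟫ < 0 :=
    convexHull_min hPstrict hconv2 hz1
  linarith
end

section
/- Let K ⊆ ℝ^n be nonempty, closed, convex, and let T : K → subsets of ℝ^n be upper semicontinuous with nonempty convex compact values. Suppose there exists ρ' > 0 such that K ∩ B̄(0,ρ') ≠ ∅, and there exists x̃ ∈ K ∩ B̄(0,ρ') and x̃* ∈ T(x̃) with ⟨x̃*, y − x̃⟩ ≥ 0 for all y ∈ K ∩ B̄(0,ρ'), and in addition there exists z° ∈ K ∩ B(0,ρ') with ⟨x*, z° − x̃⟩ ≤ 0 for all x* ∈ T(x̃). Then ⟨x̃*, z − x̃⟩ ≥ 0 for all z ∈ K, i.e., x̃ solves VI(T, K) on the whole unbounded set K. -/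
open scoped RealInnerProductSpace

/-- Extension of a solution of a truncated variational inequality to the whole
(possibly unbounded) closed convex set `K`. -/
theorem VI_truncation_extends (n : ℕ) (K : Set (EuclideanSpace ℝ (Fin n)))
    (hKne : K.Nonempty) (hKcl : IsClosed K) (hKconv : Convex ℝ K)
    (T : EuclideanSpace ℝ (Fin n) → Set (EuclideanSpace ℝ (Fin n)))
    -- `T` is upper semicontinuous on `K` with nonempty convex compact values
    (hTusc : ∀ x ∈ K, ∀ V : Set (EuclideanSpace ℝ (Fin n)), IsOpen V → T x ⊆ V →
      ∃ U ∈ nhdsWithin x K, ∀ x' ∈ U, T x' ⊆ V)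
    (hTval : ∀ x ∈ K, (T x).Nonempty ∧ Convex ℝ (T x) ∧ IsCompact (T x))
    (ρ' : ℝ) (hρ' : 0 < ρ')
    (hmeet : (K ∩ Metric.closedBall 0 ρ').Nonempty)
    (xt xts : EuclideanSpace ℝ (Fin n))
    (hxt : xt ∈ K ∩ Metric.closedBall 0 ρ') (hxts : xts ∈ T xt)
    -- `xt` solves the truncated variational inequality
    (hVI : ∀ y ∈ K ∩ Metric.closedBall 0 ρ', 0 ≤ ⟪xts, y - xt⟫)
    -- the auxiliary point `z°`
    (z0 : EuclideanSpace ℝ (Fin n)) (hz0 : z0 ∈ K ∩ Metric.ball 0 ρ')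
    (hz0le : ∀ xs ∈ T xt, ⟪xs, z0 - xt⟫ ≤ 0) :
    ∀ z ∈ K, 0 ≤ ⟪xts, z - xt⟫ := by
  intro z hz
  obtain ⟨hz0K, hz0B⟩ := hz0
  rw [Metric.mem_ball, dist_zero_right] at hz0B
  set t : ℝ := min 1 ((ρ' - ‖z0‖) / (‖z‖ + 1)) with ht
  have hzpos : (0:ℝ) < ‖z‖ + 1 := by positivity
  have htpos : 0 < t := lt_min one_pos (div_pos (by linarith) hzpos)
  have ht1 : t ≤ 1 := min_le_left _ _
  have htz : t * (‖z‖ + 1) ≤ ρ' - ‖z0‖ := by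
    have := min_le_right 1 ((ρ' - ‖z0‖) / (‖z‖ + 1))
    calc t * (‖z‖ + 1) ≤ (ρ' - ‖z0‖) / (‖z‖ + 1) * (‖z‖ + 1) := by
          exact mul_le_mul_of_nonneg_right this (le_of_lt hzpos)
      _ = ρ' - ‖z0‖ := div_mul_cancel₀ _ (ne_of_gt hzpos)
  set w := t • z + (1 - t) • z0 with hw
  have hwK : w ∈ K := hKconv hz hz0K (le_of_lt htpos) (by linarith) (by ring)
  have hwB : w ∈ Metric.closedBall (0 : EuclideanSpace ℝ (Fin n)) ρ' := by
    rw [Metric.mem_closedBall, dist_zero_right]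
    calc ‖w‖ ≤ ‖t • z‖ + ‖(1 - t) • z0‖ := norm_add_le _ _
      _ = t * ‖z‖ + (1 - t) * ‖z0‖ := by
          rw [norm_smul, norm_smul, Real.norm_eq_abs, Real.norm_eq_abs,
            abs_of_pos htpos, abs_of_nonneg (by linarith : (0:ℝ) ≤ 1 - t)]
      _ ≤ ρ' := by nlinarith [norm_nonneg z0, norm_nonneg z]
  have h1 : 0 ≤ ⟪xts, w - xt⟫ := hVI w ⟨hwK, hwB⟩
  have h2 : ⟪xts, z0 - xt⟫ ≤ 0 := hz0le xts hxts
  have hexp : ⟪xts, w - xt⟫ = t * ⟪xts, z - xt⟫ + (1 - t) * ⟪xts, z0 - xt⟫ := by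
    have : w - xt = t • (z - xt) + (1 - t) • (z0 - xt) := by
      rw [hw]; module
    rw [this, inner_add_right, real_inner_smul_right, real_inner_smul_right]
  have : 0 ≤ t * ⟪xts, z - xt⟫ := by nlinarith
  exact nonneg_of_mul_nonneg_right this htpos
end
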